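/- For every integer k ≥ 1, the supertrace of the k-th power of the Laplace–Beltrami operator vanishes: str(L^k) = Σ_p (−1)^p tr(L_p^k) = 0. -/

import Mathlib

open Matrix Finset BigOperators

variable {V : Type*} [Fintype V] [LinearOrder V]

/-- Incidence coefficient between finsets `t` and `s`: it is `(-1)^i` if `s` is obtained from `t`
by deleting its `i`-th vertex (in the linear order on vertices), and `0` otherwise. This encodes
the exterior derivative `(d f)(x_0,…,x_{k+1}) = ∑ i (−1)^i f(x_0,…,x̂_i,…,x_{k+1})` on simplices
whose vertices are ordered increasingly. -/
def dEntry (t s : Finset V) : ℝ :=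
  ∑ v ∈ t, if s = t.erase v then (-1 : ℝ) ^ (t.filter (· < v)).card else 0

variable (G : SimpleGraph V) [DecidableRel G.Adj]

/-- The set `𝒢_k` of `k`-simplices of `G`, i.e. the complete subgraphs on `k+1` vertices,
encoded as the `(k+1)`-cliques of `G`.  `Ω_k = Cl G k → ℝ` is the space of `k`-forms. -/
abbrev Cl (k : ℕ) := {s : Finset V // s ∈ G.cliqueFinset (k + 1)}

/-- The set `𝒢` of all simplices (nonempty complete subgraphs) of `G`; the total space of forms
is `Ω = ⊕_k Ω_k = Simp G → ℝ`. -/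
abbrev Simp := {s : Finset V // s.Nonempty ∧ s ∈ G.cliqueFinset s.card}

/-- The exterior derivative `d_k : Ω_k → Ω_{k+1}` as a matrix (its transpose is `d_k^*`). -/
def dMat (k : ℕ) : Matrix (Cl G (k + 1)) (Cl G k) ℝ := fun t s => dEntry t.1 s.1

/-- The Laplace–Beltrami block `L_p = d_p^* d_p + d_{p-1} d_{p-1}^*` on `Ω_p` (with `d_{-1} = 0`). -/
def Lmat : (p : ℕ) → Matrix (Cl G p) (Cl G p) ℝ
  | 0 => (dMat G 0)ᵀ * dMat G 0
  | (k + 1) => (dMat G (k + 1))ᵀ * dMat G (k + 1) + dMat G k * (dMat G k)ᵀ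

/-- The total exterior derivative `d = ⊕_k d_k` on `Ω`, as a matrix on the simplex set. -/
def dTot : Matrix (Simp G) (Simp G) ℝ := fun t s => dEntry t.1 s.1

/-- The Dirac operator `D = d + d^*` of `G`, as a symmetric matrix on the simplex set. -/
def Dmat : Matrix (Simp G) (Simp G) ℝ := dTot G + (dTot G)ᵀ

/-- The Euler characteristic `χ(G) = ∑_k (−1)^k v_k = ∑_{x ∈ 𝒢} (−1)^{dim x}`. -/
def chi : ℤ := ∑ s : Simp G, (-1) ^ (s.1.card - 1)

/-- The supertrace `str(A) = tr(γ A)` where `γ` acts by `(−1)^k` on `Ω_k`. -/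
def str {R : Type*} [CommRing R] (A : Matrix (Simp G) (Simp G) R) : R :=
  ∑ s : Simp G, (-1) ^ (s.1.card - 1) * A s s

/-- The `k`-th Betti number `b_k = dim ker d_k − rank d_{k−1}` (with `d_{−1} = 0`). -/
noncomputable def betti : ℕ → ℕ
  | 0 => Module.finrank ℝ (LinearMap.ker (dMat G 0).mulVecLin)
  | (k + 1) => Module.finrank ℝ (LinearMap.ker (dMat G (k + 1)).mulVecLin) - (dMat G k).rank

/-!
Since `d ∘ d = 0`, the up part `d_p^* d_p` and the down part `d_{p-1} d_{p-1}^*` of `L_p`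
annihilate each other, so `L_p^k` is the sum of their `k`-th powers. As `tr((A B)^k) = tr((B A)^k)`
for `k ≥ 1`, the up part of `L_p` and the down part of `L_{p+1}` contribute equally with opposite
signs. The alternating sum thus telescopes, and both boundary terms vanish: `L_0` has no down part,
and `G` has no simplices of dimension `|V|`.
-/

theorem add_pow_of_mul_eq_zero {R : Type*} [Semiring R] {a b : R} (hab : a * b = 0)
    (hba : b * a = 0) {k : ℕ} (hk : k ≠ 0) : (a + b) ^ k = a ^ k + b ^ k := by
  induction k with
  | zero => exact absurd rfl hk
  | succ j ih =>
    rcases eq_or_ne j 0 with rfl | hj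
    · simp
    obtain ⟨i, rfl⟩ := Nat.exists_eq_succ_of_ne_zero hj
    have hab' : a ^ (i + 1) * b = 0 := by rw [pow_succ, mul_assoc, hab, mul_zero]
    have hba' : b ^ (i + 1) * a = 0 := by rw [pow_succ, mul_assoc, hba, mul_zero]
    rw [pow_succ, ih hj, add_mul, mul_add, mul_add, hab', hba', ← pow_succ, ← pow_succ,
      add_zero, zero_add]

namespace Matrix

variable {m n R : Type*} [Fintype m] [Fintype n] [DecidableEq m] [DecidableEq n] [CommSemiring R]

theorem mul_pow_mul_eq_mul_mul_pow (A : Matrix m n R) (B : Matrix n m R) (j : ℕ) :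
    (A * B) ^ j * A = A * (B * A) ^ j := by
  induction j with
  | zero => simp
  | succ j ih => rw [pow_succ, Matrix.mul_assoc, Matrix.mul_assoc A B A, ← Matrix.mul_assoc, ih,
      Matrix.mul_assoc, ← pow_succ]

theorem trace_mul_pow_comm (A : Matrix m n R) (B : Matrix n m R) {k : ℕ} (hk : k ≠ 0) :
    trace ((A * B) ^ k) = trace ((B * A) ^ k) := by
  obtain ⟨j, rfl⟩ := Nat.exists_eq_add_one_of_ne_zero hk
  rw [pow_succ, ← Matrix.mul_assoc, mul_pow_mul_eq_mul_mul_pow, Matrix.mul_assoc, trace_mul_comm,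
    Matrix.mul_assoc, ← pow_succ]

end Matrix

section Incidence

omit [Fintype V]

theorem sum_dEntry_mul {t : Finset V} {S : Finset (Finset V)} (hS : ∀ v ∈ t, t.erase v ∈ S)
    (f : Finset V → ℝ) :
    ∑ s ∈ S, dEntry t s * f s = ∑ v ∈ t, (-1 : ℝ) ^ #{u ∈ t | u < v} * f (t.erase v) := by
  simp only [dEntry, sum_mul, ite_mul, zero_mul]
  rw [sum_comm]
  exact sum_congr rfl fun v hv => by rw [sum_ite_eq', if_pos (hS v hv)]

theorem neg_one_pow_card_filter_lt_erase {t : Finset V} {v w : V} (hv : v ∈ t) (hvw : v < w) :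
    (-1 : ℝ) ^ #{u ∈ t | u < v} * (-1) ^ #{u ∈ t.erase v | u < w} =
      -((-1) ^ #{u ∈ t | u < w} * (-1) ^ #{u ∈ t.erase w | u < v}) := by
  have below_v : #{u ∈ t.erase w | u < v} = #{u ∈ t | u < v} := by
    rw [filter_erase, erase_eq_of_notMem (by simp [hvw.le])]
  have below_w : #{u ∈ t.erase v | u < w} + 1 = #{u ∈ t | u < w} := by
    rw [filter_erase, card_erase_add_one (mem_filter.mpr ⟨hv, hvw⟩)]
  rw [below_v, ← below_w, pow_succ]
  ring

/-- This is `d ∘ d = 0`: deleting `v` and then `w` from `t`, or `w` and then `v`, gives the same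
face with opposite signs. -/
theorem sum_neg_one_pow_mul_dEntry_erase (t r : Finset V) :
    ∑ v ∈ t, (-1 : ℝ) ^ #{u ∈ t | u < v} * dEntry (t.erase v) r = 0 := by
  simp only [dEntry, mul_sum]
  rw [sum_sigma']
  refine sum_involution (fun x _ => ⟨x.2, x.1⟩) ?_ ?_ ?_ (fun _ _ => rfl)
  · rintro ⟨v, w⟩ hvw
    simp only [mem_sigma, mem_erase] at hvw
    obtain ⟨hv, hwv, hw⟩ := hvw
    simp only [mul_ite, mul_zero, erase_right_comm (s := t) (a := w)]
    split_ifs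
    · rcases hwv.lt_or_gt with h | h
      · rw [neg_one_pow_card_filter_lt_erase hw h]; ring
      · rw [neg_one_pow_card_filter_lt_erase hv h]; ring
    · ring
  · rintro ⟨v, w⟩ hvw - h
    simp only [mem_sigma, mem_erase] at hvw
    exact hvw.2.1 (congrArg Sigma.fst h)
  · rintro ⟨v, w⟩ hvw
    simp only [mem_sigma, mem_erase] at hvw ⊢
    exact ⟨hvw.2.2, hvw.2.1.symm, hvw.1⟩

end Incidence

theorem dMat_succ_mul_dMat (p : ℕ) : dMat G (p + 1) * dMat G p = 0 := by
  ext t r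
  have faces_mem : ∀ v ∈ t.1, t.1.erase v ∈ G.cliqueFinset (p + 2) := fun v hv =>
    SimpleGraph.mem_cliqueFinset_iff.mpr ((SimpleGraph.mem_cliqueFinset_iff.mp t.2).erase_of_mem hv)
  rw [mul_apply, Matrix.zero_apply]
  exact (sum_coe_sort (G.cliqueFinset (p + 2)) fun s => dEntry t.1 s * dEntry s r.1).trans
    ((sum_dEntry_mul faces_mem _).trans (sum_neg_one_pow_mul_dEntry_erase t.1 r.1))

def downLaplacian : (p : ℕ) → Matrix (Cl G p) (Cl G p) ℝ
  | 0 => 0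
  | p + 1 => dMat G p * (dMat G p)ᵀ

theorem Lmat_eq (p : ℕ) : Lmat G p = (dMat G p)ᵀ * dMat G p + downLaplacian G p := by
  cases p <;> simp [Lmat, downLaplacian]

theorem trace_Lmat_pow (p : ℕ) {k : ℕ} (hk : k ≠ 0) :
    trace (Lmat G p ^ k) =
      trace (downLaplacian G (p + 1) ^ k) + trace (downLaplacian G p ^ k) := by
  have up_mul_down : (dMat G p)ᵀ * dMat G p * downLaplacian G p = 0 := by
    cases p with
    | zero => simp [downLaplacian]
    | succ p =>
      rw [downLaplacian, Matrix.mul_assoc, ← Matrix.mul_assoc (dMat G (p + 1)),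
        dMat_succ_mul_dMat, Matrix.zero_mul, Matrix.mul_zero]
  have down_mul_up : downLaplacian G p * ((dMat G p)ᵀ * dMat G p) = 0 := by
    cases p with
    | zero => simp [downLaplacian]
    | succ p =>
      rw [downLaplacian, Matrix.mul_assoc, ← Matrix.mul_assoc (dMat G p)ᵀ, ← transpose_mul,
        dMat_succ_mul_dMat, transpose_zero, Matrix.zero_mul, Matrix.mul_zero]
  rw [Lmat_eq, add_pow_of_mul_eq_zero up_mul_down down_mul_up hk, trace_add,
    trace_mul_pow_comm _ _ hk, downLaplacian]

/-- For every integer `k ≥ 1`, the supertrace of the `k`-th power of the Laplace–Beltrami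
operator vanishes: `str(L^k) = ∑_p (−1)^p tr(L_p^k) = 0` (the sum over all `p` equals the sum
over `p < N` for any `N ≥ |V|`, since all higher blocks are empty). -/
theorem supertrace_laplacian_pow (k : ℕ) (hk : 1 ≤ k) (N : ℕ) (hN : Fintype.card V ≤ N) :
    ∑ p ∈ Finset.range N, (-1 : ℝ) ^ p * ((Lmat G p) ^ k).trace = 0 := by
  have hk0 : k ≠ 0 := Nat.one_le_iff_ne_zero.mp hk
  set c : ℕ → ℝ := fun p => (-1) ^ p * trace (downLaplacian G p ^ k)
  have telescope : ∀ p, (-1 : ℝ) ^ p * trace (Lmat G p ^ k) = c p - c (p + 1) := fun p => by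
    simp only [c, trace_Lmat_pow G p hk0, pow_succ]
    ring
  have no_N_simplices : IsEmpty (Cl G N) := ⟨fun s => by
    simpa [(G.cliqueFree_of_card_lt (Nat.lt_add_one_of_le hN)).cliqueFinset] using s.2⟩
  have c_zero : c 0 = 0 := by simp [c, downLaplacian, zero_pow hk0]
  have c_N : c N = 0 := by simp only [c, trace_eq_zero_of_isEmpty, mul_zero]
  rw [sum_congr rfl fun p _ => telescope p, sum_range_sub', c_zero, c_N, sub_zero]
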